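/- Suppose Σⱼ |α'ⱼ − αⱼ| ≤ δ_A, Σⱼ α'ⱼ ‖v'ⱼ − vⱼ‖ ≤ λ‖v'ᵢ − vᵢ‖ for some λ ≥ 1, all ‖vⱼ‖, ‖v'ⱼ‖ ∈ [V_min, V_max], and the outputs h = Σⱼ αⱼvⱼ, h' = Σⱼ α'ⱼv'ⱼ satisfy ‖h‖, ‖h'‖ ≥ H_min > 0. Then 1 − S_cos(h, h') ≤ C·(1 − S_cos(vᵢ, v'ᵢ)) + ε, where C = (λ V_max / H_min)² and ε = (2XY + Y²)/(2H_min²) with X = λV_max√(2(1 − S_cos(vᵢ, v'ᵢ))) and Y = λ(V_max − V_min) + δ_A V_max. -/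

import Mathlib

noncomputable def scos {d : ℕ} (x y : EuclideanSpace ℝ (Fin d)) : ℝ :=
  (inner ℝ x y : ℝ) / (‖x‖ * ‖y‖)

/-!
Write `s := 1 - scos x y`. The identity `‖x - y‖² = (‖x‖ - ‖y‖)² + 2‖x‖‖y‖ s` does both jobs:
with norms at least `H_min` it gives `s ≤ ‖x - y‖² / (2 H_min²)`, and with norms in
`[V_min, V_max]` it gives `‖x - y‖ ≤ (V_max - V_min) + V_max √(2 s)`. Splitting
`α'ⱼ v'ⱼ - αⱼ vⱼ = α'ⱼ (v'ⱼ - vⱼ) + (α'ⱼ - αⱼ) vⱼ` bounds the output drift `‖h - h'‖` by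
`X + Y`, and the claim is the first bound applied to `h, h'`, after expanding `(X + Y)²`.
-/

open Finset

section Drift

variable {ι 𝕜 E : Type*} [NormedField 𝕜] [SeminormedAddCommGroup E] [NormedSpace 𝕜 E]

theorem norm_sum_smul_sub_sum_smul_le (s : Finset ι) (a a' : ι → 𝕜) (x y : ι → E) :
    ‖∑ j ∈ s, a' j • y j - ∑ j ∈ s, a j • x j‖ ≤
      ∑ j ∈ s, ‖a' j‖ * ‖y j - x j‖ + ∑ j ∈ s, ‖a' j - a j‖ * ‖x j‖ := by
  rw [← sum_sub_distrib, ← sum_add_distrib]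
  refine (norm_sum_le _ _).trans (sum_le_sum fun j _ => ?_)
  have hsplit : a' j • y j - a j • x j = a' j • (y j - x j) + (a' j - a j) • x j := by
    rw [smul_sub, sub_smul]; abel
  rw [hsplit, ← norm_smul, ← norm_smul]
  exact norm_add_le _ _

end Drift

section Scos

variable {d : ℕ} (x y : EuclideanSpace ℝ (Fin d))

theorem scos_le_one : scos x y ≤ 1 :=
  le_of_abs_le (abs_real_inner_div_norm_mul_norm_le_one x y)

/-- Holds also when `x` or `y` vanishes, where `scos x y` is the junk value `0`. -/
theorem norm_mul_norm_mul_scos : ‖x‖ * ‖y‖ * scos x y = inner ℝ x y := by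
  by_cases hxy : ‖x‖ * ‖y‖ = 0
  · rw [hxy, zero_mul, eq_comm, ← abs_nonpos_iff, ← hxy]
    exact abs_real_inner_le_norm x y
  · exact mul_div_cancel₀ _ hxy

theorem norm_sub_sq_eq_sq_add_scos :
    ‖x - y‖ ^ 2 = (‖x‖ - ‖y‖) ^ 2 + 2 * (‖x‖ * ‖y‖) * (1 - scos x y) := by
  rw [norm_sub_sq_real, ← norm_mul_norm_mul_scos]
  ring

theorem one_sub_scos_le_norm_sub_sq_div {H : ℝ} (hH : 0 < H) (hx : H ≤ ‖x‖) (hy : H ≤ ‖y‖) :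
    1 - scos x y ≤ ‖x - y‖ ^ 2 / (2 * H ^ 2) := by
  have hs : 0 ≤ 1 - scos x y := sub_nonneg.2 (scos_le_one x y)
  have hH2 : H ^ 2 ≤ ‖x‖ * ‖y‖ := by rw [sq]; exact mul_le_mul hx hy hH.le (hH.le.trans hx)
  rw [le_div_iff₀ (by positivity), norm_sub_sq_eq_sq_add_scos]
  nlinarith [sq_nonneg (‖x‖ - ‖y‖)]

theorem norm_sub_le_of_norm_mem_Icc {Vmin Vmax : ℝ} (hx : ‖x‖ ∈ Set.Icc Vmin Vmax)
    (hy : ‖y‖ ∈ Set.Icc Vmin Vmax) :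
    ‖x - y‖ ≤ (Vmax - Vmin) + Vmax * Real.sqrt (2 * (1 - scos x y)) := by
  have hVmax : 0 ≤ Vmax := (norm_nonneg x).trans hx.2
  have hs : 0 ≤ 2 * (1 - scos x y) := by linarith [scos_le_one x y]
  have hgap : |‖x‖ - ‖y‖| ≤ Vmax - Vmin := abs_sub_le_of_le_of_le hx.1 hx.2 hy.1 hy.2
  have hprod : ‖x‖ * ‖y‖ ≤ Vmax ^ 2 := by
    rw [sq]; exact mul_le_mul hx.2 hy.2 (norm_nonneg y) hVmax
  refine le_of_sq_le_sq ?_ (add_nonneg ((abs_nonneg _).trans hgap) (by positivity))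
  rw [norm_sub_sq_eq_sq_add_scos, add_sq, mul_pow, Real.sq_sqrt hs, ← sq_abs (‖x‖ - ‖y‖)]
  have hcross : 0 ≤ 2 * (Vmax - Vmin) * (Vmax * Real.sqrt (2 * (1 - scos x y))) := by
    have := (abs_nonneg _).trans hgap
    positivity
  nlinarith [pow_le_pow_left₀ (abs_nonneg _) hgap 2, mul_le_mul_of_nonneg_right hprod hs]

end Scos

theorem attention_output_similarity_bound_general {n d : ℕ}
    (α α' : Fin n → ℝ) (hα' : ∀ j, 0 ≤ α' j)
    (v v' : Fin n → EuclideanSpace ℝ (Fin d)) (i : Fin n)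
    (δA lam Vmin Vmax Hmin : ℝ)
    (hδA : ∑ j, |α' j - α j| ≤ δA)
    (hlam : 1 ≤ lam)
    (hdrift : ∑ j, α' j * ‖v' j - v j‖ ≤ lam * ‖v' i - v i‖)
    (hv : ∀ j, Vmin ≤ ‖v j‖ ∧ ‖v j‖ ≤ Vmax)
    (hv' : ∀ j, Vmin ≤ ‖v' j‖ ∧ ‖v' j‖ ≤ Vmax)
    (h h' : EuclideanSpace ℝ (Fin d))
    (hh : h = ∑ j, α j • v j) (hh' : h' = ∑ j, α' j • v' j)
    (hHmin : 0 < Hmin) (hhn : Hmin ≤ ‖h‖) (hhn' : Hmin ≤ ‖h'‖) :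
    1 - scos h h' ≤
      (lam * Vmax / Hmin) ^ 2 * (1 - scos (v i) (v' i)) +
        (2 * (lam * Vmax * Real.sqrt (2 * (1 - scos (v i) (v' i)))) *
              (lam * (Vmax - Vmin) + δA * Vmax) +
            (lam * (Vmax - Vmin) + δA * Vmax) ^ 2) /
          (2 * Hmin ^ 2) := by
  set s := 1 - scos (v i) (v' i)
  have hVmax : 0 ≤ Vmax := (norm_nonneg _).trans (hv i).2
  have hvi : ‖v' i - v i‖ ≤ (Vmax - Vmin) + Vmax * Real.sqrt (2 * s) := by
    rw [norm_sub_rev]; exact norm_sub_le_of_norm_mem_Icc _ _ (hv i) (hv' i)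
  have hweights : ∑ j, |α' j - α j| * ‖v j‖ ≤ δA * Vmax :=
    calc ∑ j, |α' j - α j| * ‖v j‖ ≤ (∑ j, |α' j - α j|) * Vmax := by
          rw [sum_mul]; gcongr with j; exact (hv j).2
      _ ≤ δA * Vmax := by gcongr
  have hout : ‖h - h'‖ ≤ lam * Vmax * Real.sqrt (2 * s) + (lam * (Vmax - Vmin) + δA * Vmax) :=
    calc ‖h - h'‖ ≤ ∑ j, ‖α' j‖ * ‖v' j - v j‖ + ∑ j, ‖α' j - α j‖ * ‖v j‖ := by
          rw [norm_sub_rev, hh, hh']; exact norm_sum_smul_sub_sum_smul_le _ _ _ _ _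
      _ ≤ lam * ‖v' i - v i‖ + δA * Vmax := by
          simp only [Real.norm_eq_abs, abs_of_nonneg (hα' _)]; gcongr
      _ ≤ lam * ((Vmax - Vmin) + Vmax * Real.sqrt (2 * s)) + δA * Vmax := by gcongr
      _ = _ := by ring
  have hs : 0 ≤ 2 * s := by linarith [scos_le_one (v i) (v' i)]
  calc 1 - scos h h' ≤ ‖h - h'‖ ^ 2 / (2 * Hmin ^ 2) :=
        one_sub_scos_le_norm_sub_sq_div h h' hHmin hhn hhn'
    _ ≤ (lam * Vmax * Real.sqrt (2 * s) + (lam * (Vmax - Vmin) + δA * Vmax)) ^ 2 /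
          (2 * Hmin ^ 2) := by gcongr
    _ = _ := by field_simp; rw [add_sq, mul_pow, Real.sq_sqrt hs]; ring

theorem attention_output_similarity_bound {n d : ℕ}
    (α α' : Fin n → ℝ) (hα : ∀ j, 0 ≤ α j) (hα' : ∀ j, 0 ≤ α' j)
    (v v' : Fin n → EuclideanSpace ℝ (Fin d)) (i : Fin n)
    (δA lam Vmin Vmax Hmin : ℝ)
    (hδA : ∑ j, |α' j - α j| ≤ δA)
    (hlam : 1 ≤ lam)
    (hdrift : ∑ j, α' j * ‖v' j - v j‖ ≤ lam * ‖v' i - v i‖)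
    (hv : ∀ j, Vmin ≤ ‖v j‖ ∧ ‖v j‖ ≤ Vmax)
    (hv' : ∀ j, Vmin ≤ ‖v' j‖ ∧ ‖v' j‖ ≤ Vmax)
    (h h' : EuclideanSpace ℝ (Fin d))
    (hh : h = ∑ j, α j • v j) (hh' : h' = ∑ j, α' j • v' j)
    (hHmin : 0 < Hmin) (hhn : Hmin ≤ ‖h‖) (hhn' : Hmin ≤ ‖h'‖) :
    1 - scos h h' ≤
      (lam * Vmax / Hmin) ^ 2 * (1 - scos (v i) (v' i)) +
        (2 * (lam * Vmax * Real.sqrt (2 * (1 - scos (v i) (v' i)))) *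
              (lam * (Vmax - Vmin) + δA * Vmax) +
            (lam * (Vmax - Vmin) + δA * Vmax) ^ 2) /
          (2 * Hmin ^ 2) :=
  attention_output_similarity_bound_general α α' hα' v v' i δA lam Vmin Vmax Hmin hδA hlam hdrift hv
    hv' h h' hh hh' hHmin hhn hhn'
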